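/- For elementary cellular automaton Rule 7 on a ring of size n ≥ 2, the parallel fixed points are exactly the two alternating configurations (01)^{n/2} and (10)^{n/2}, which exist if and only if n is even. -/

import Mathlib

/-- Single-cell update: replace the state of cell `i` by the local rule applied
to its neighborhood on the ring `ZMod n`. -/
def eupdate (n : ℕ) (f : Bool → Bool → Bool → Bool) (x : ZMod n → Bool) (i : ZMod n) :
    ZMod n → Bool :=
  Function.update x i (f (x (i - 1)) (x i) (x (i + 1)))

/-- Synchronous (parallel) step. -/
def parStep (n : ℕ) (f : Bool → Bool → Bool → Bool) (x : ZMod n → Bool) : ZMod n → Bool :=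
  fun i => f (x (i - 1)) (x i) (x (i + 1))

/-- `x` is a fixed point of the parallel dynamics. -/
def IsFixedConfig (n : ℕ) (f : Bool → Bool → Bool → Bool) (x : ZMod n → Bool) : Prop :=
  ∀ i : ZMod n, f (x (i - 1)) (x i) (x (i + 1)) = x i

/-- One full sequential step under the sequential update mode `μ`
(a permutation of the cells): update cells one at a time in the order
`μ 0, μ 1, …, μ (n-1)`. -/
def seqStep (n : ℕ) (f : Bool → Bool → Bool → Bool) (μ : Fin n ≃ ZMod n)
    (x : ZMod n → Bool) : ZMod n → Bool :=
  (List.finRange n).foldl (fun y k => eupdate n f y (μ k)) x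

/-- One full sequential step under the descending order `(n-1, n-2, …, 0)`. -/
def seqStepDesc (n : ℕ) (f : Bool → Bool → Bool → Bool) (x : ZMod n → Bool) : ZMod n → Bool :=
  ((List.range n).reverse).foldl (fun y k => eupdate n f y (k : ZMod n)) x

/-- One full sequential step under the ascending order `(0, 1, …, n-1)`. -/
def seqStepAsc (n : ℕ) (f : Bool → Bool → Bool → Bool) (x : ZMod n → Bool) : ZMod n → Bool :=
  (List.range n).foldl (fun y k => eupdate n f y (k : ZMod n)) x

def rule7 : Bool → Bool → Bool → Bool
  | true, true, true => false
  | true, true, false => false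
  | true, false, true => false
  | true, false, false => false
  | false, true, true => false
  | false, true, false => true
  | false, false, true => true
  | false, false, false => true

/-! Rule 7 keeps a cell's state exactly when that state is the negation of the left neighbour's
(the condition on the right neighbour then holds automatically), so the fixed points are the
alternating configurations; these close up around the ring precisely when `n` is even. -/

theorem rule7_eq_self_iff (a b c : Bool) : rule7 a b c = b ↔ b = !a ∧ !(b && c) := by
  revert a b c
  decide

theorem isFixedConfig_rule7_iff {n : ℕ} {x : ZMod n → Bool} :
    IsFixedConfig n rule7 x ↔ ∀ i, x (i + 1) = !x i := by
  simp only [IsFixedConfig, rule7_eq_self_iff]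
  constructor
  · intro hx i
    simpa using (hx (i + 1)).1
  · intro hx i
    refine ⟨by simpa using hx (i - 1), ?_⟩
    rw [hx i]
    cases x i <;> rfl

section Alternating

variable {M : Type*} [AddMonoidWithOne M] {x : M → Bool}

theorem apply_natCast_of_alternating (hx : ∀ i, x (i + 1) = !x i) (k : ℕ) :
    x k = (x 0 ^^ decide (k % 2 = 1)) := by
  induction k with
  | zero => simp
  | succ k ih =>
    rw [Nat.cast_succ, hx, ih]
    rcases Nat.mod_two_eq_zero_or_one k with h | h <;> simp [h, Nat.succ_mod_two_eq_one_iff]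

theorem even_of_alternating (hx : ∀ i, x (i + 1) = !x i) {n : ℕ} (hn : (n : M) = 0) :
    Even n := by
  have h : (x 0 ^^ false) = (x 0 ^^ decide (n % 2 = 1)) := by
    rw [Bool.xor_false, ← apply_natCast_of_alternating hx n, hn]
  simpa [Nat.even_iff] using Bool.xor_right_inj.mp h

end Alternating

theorem ZMod.val_add_one_mod_two {n : ℕ} [NeZero n] (hn : 2 ∣ n) (i : ZMod n) :
    (i + 1).val % 2 = (i.val + 1) % 2 := by
  rw [← ZMod.natCast_zmod_val i, ← Nat.cast_succ, ZMod.val_natCast, ZMod.val_natCast,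
    Nat.mod_mod_of_dvd _ hn, Nat.mod_eq_of_lt (ZMod.val_lt i)]

theorem rule7_fixed_points (n : ℕ) (hn : 2 ≤ n) (x : ZMod n → Bool) :
    IsFixedConfig n rule7 x ↔
      (Even n ∧ ((∀ i : ZMod n, x i = decide (i.val % 2 = 0)) ∨
                 (∀ i : ZMod n, x i = decide (i.val % 2 = 1)))) := by
  have : NeZero n := ⟨by omega⟩
  rw [isFixedConfig_rule7_iff]
  constructor
  · intro hx
    have hval (i : ZMod n) : x i = (x 0 ^^ decide (i.val % 2 = 1)) := by
      rw [← apply_natCast_of_alternating hx, ZMod.natCast_zmod_val]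
    refine ⟨even_of_alternating hx (ZMod.natCast_self n), ?_⟩
    cases h0 : x 0
    · right
      simpa [h0] using hval
    · left
      intro i
      simp [hval i, h0, ← decide_not]
  · rintro ⟨hev, hx | hx⟩ i <;>
      simp [hx, ZMod.val_add_one_mod_two hev.two_dvd, Nat.succ_mod_two_eq_zero_iff,
        Nat.succ_mod_two_eq_one_iff, ← decide_not]
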